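/- Let ν ≥ 0 and p ≥ ν+1. Suppose q_{p,ν} ∈ Λ_{p−ν}^{p+ν+1} satisfies q_{p,ν}(1) = 1, q_{p,ν}(−1) = 0 and q_{p,ν}^{(i)}(±1) = 0 for i = 1,…,ν. Define q_{p,ν+1} := q_{p,ν} + α_{p,ν+1} ψ_{p,ν+1} + β_{p,ν+1} ψ_{p+1,ν+1} with α_{p,ν+1} = −(q_{p,ν}^{(ν+1)}(1) + (−1)^p q_{p,ν}^{(ν+1)}(−1))/2 and β_{p,ν+1} = −(q_{p,ν}^{(ν+1)}(1) − (−1)^p q_{p,ν}^{(ν+1)}(−1))/2. Then q_{p,ν+1} ∈ Λ_{p−ν−1}^{p+ν+2}, q_{p,ν+1}(1) = 1, q_{p,ν+1}(−1) = 0, and q_{p,ν+1}^{(i)}(±1) = 0 for i = 1,…,ν+1. -/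

import Mathlib

open MeasureTheory Polynomial

noncomputable section

/-- The Legendre polynomial of degree `n`, via Rodrigues' formula. -/
def leg (n : ℕ) : Polynomial ℝ :=
  ((1 : ℝ) / (2 ^ n * n.factorial)) • derivative^[n] ((X ^ 2 - 1) ^ n)

/-- The closed interval `Ω̄ = [-1, 1]`. -/
def Iom : Set ℝ := Set.Icc (-1 : ℝ) 1

/-- Squared `L²(Ω)` norm. -/
def nsq (f : ℝ → ℝ) : ℝ := ∫ x in Iom, f x ^ 2

/-- The `L²(Ω)` inner product. -/
def ip (f g : ℝ → ℝ) : ℝ := ∫ x in Iom, f x * g x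

/-- Membership in the Sobolev space `H^k(Ω)` (strong form). -/
def MemH (k : ℕ) (w : ℝ → ℝ) : Prop := ContDiffOn ℝ k w Iom

/-- The squared Sobolev seminorm `|w|_k² = ‖w^{(k)}‖₀²`. -/
def semSq (k : ℕ) (w : ℝ → ℝ) : ℝ := nsq (iteratedDerivWithin k w Iom)

/-- `P` coincides with a polynomial of degree `≤ p`. -/
def IsPolyDeg (p : ℕ) (P : ℝ → ℝ) : Prop :=
  ∃ q : Polynomial ℝ, q.natDegree ≤ p ∧ ∀ x, P x = q.eval x

/-- `P = π_p w` is the `L²(Ω)` projection of `w` onto polynomials of degree `≤ p`. -/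
def IsL2Proj (p : ℕ) (w P : ℝ → ℝ) : Prop :=
  IsPolyDeg p P ∧
    ∀ v : Polynomial ℝ, v.natDegree ≤ p → ∫ x in Iom, (P x - w x) * v.eval x = 0

/-- `ψ_{i,n}`: the `n`-th primitive of the Legendre polynomial `L_i`. -/
def psi (i : ℕ) : ℕ → ℝ → ℝ
  | 0 => fun x => (leg i).eval x
  | n + 1 => fun x => ∫ t in (-1 : ℝ)..x, psi i n t

/-- `f ∈ Λ_i^j = span{L_i, …, L_j}`. -/
def inLegSpan (i j : ℕ) (f : ℝ → ℝ) : Prop :=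
  ∃ c : ℕ → ℝ, ∀ x, f x = ∑ m ∈ Finset.Icc i j, c m * (leg m).eval x

/-- The defining properties of `q_{p,ν}`. -/
def IsQ (p ν : ℕ) (q : ℝ → ℝ) : Prop :=
  inLegSpan (p - ν) (p + ν + 1) q ∧ q 1 = 1 ∧ q (-1) = 0 ∧
    ∀ i, 1 ≤ i → i ≤ ν → iteratedDeriv i q 1 = 0 ∧ iteratedDeriv i q (-1) = 0

/-- Recursive construction of `q_{p,ν}`. -/
def qrec (p : ℕ) : ℕ → ℝ → ℝ
  | 0 => fun x => ((leg p).eval x + (leg (p + 1)).eval x) / 2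
  | ν + 1 => fun x =>
      qrec p ν x
        + (-(iteratedDeriv (ν + 1) (qrec p ν) 1
              + (-1 : ℝ) ^ p * iteratedDeriv (ν + 1) (qrec p ν) (-1)) / 2) * psi p (ν + 1) x
        + (-(iteratedDeriv (ν + 1) (qrec p ν) 1
              - (-1 : ℝ) ^ p * iteratedDeriv (ν + 1) (qrec p ν) (-1)) / 2) * psi (p + 1) (ν + 1) x

/-- The coefficient `α_{p,ν}` of the recursive construction. -/
def alphaC (p ν : ℕ) : ℝ :=
  -(iteratedDeriv ν (qrec p (ν - 1)) 1 + (-1 : ℝ) ^ p * iteratedDeriv ν (qrec p (ν - 1)) (-1)) / 2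

/-- The coefficient `β_{p,ν}` of the recursive construction. -/
def betaC (p ν : ℕ) : ℝ :=
  -(iteratedDeriv ν (qrec p (ν - 1)) 1 - (-1 : ℝ) ^ p * iteratedDeriv ν (qrec p (ν - 1)) (-1)) / 2

end

/-!
Everything here is a polynomial. Rodrigues' formula gives `L'_{k+2} - L'_k = (2k+3) L_{k+1}`,
and `L_j(1) = 1`, `L_j(-1) = (-1)^j`; hence `(L_{k+2} - L_k) / (2k+3)` is an antiderivative of
`L_{k+1}` in `Λ_k^{k+2}` vanishing at `±1`. Iterating, for `n ≤ i` the primitive `ψ_{i,n}` lies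
in `Λ_{i-n}^{i+n}`, its derivatives of order `< n` vanish at `±1` and its `n`-th derivative is
`L_i`. So adding multiples of `ψ_{p,ν+1}` and `ψ_{p+1,ν+1}` to `q_{p,ν}` keeps it in
`Λ_{p-ν-1}^{p+ν+2}` and leaves its endpoint data up to order `ν` unchanged, and `α`, `β` solve
the `2 × 2` system `α + β = -q^{(ν+1)}(1)`, `(-1)^p (α - β) = -q^{(ν+1)}(-1)` that makes the
derivatives of order `ν + 1` vanish.
-/

lemma derivative_derivative_X_sq_sub_one_pow (k : ℕ) :
    derivative (derivative (((X : ℝ[X]) ^ 2 - 1) ^ (k + 2))) =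
      (2 * (k + 2) : ℝ) • ((2 * k + 3 : ℝ) • (X ^ 2 - 1) ^ (k + 1)
        + (2 * (k + 1) : ℝ) • (X ^ 2 - 1) ^ k) := by
  simp only [smul_eq_C_mul, derivative_pow, derivative_mul, derivative_sub,
    derivative_one, derivative_C, derivative_X, derivative_zero]
  simp only [map_add, map_mul, map_natCast, map_ofNat, C_1]
  push_cast
  ring

lemma derivative_leg_add_two (k : ℕ) :
    derivative (leg (k + 2)) = (2 * k + 3 : ℝ) • leg (k + 1) + derivative (leg k) := by
  simp only [leg, derivative_smul, ← Function.iterate_succ_apply' derivative]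
  rw [Function.iterate_succ_apply, Function.iterate_succ_apply,
    derivative_derivative_X_sq_sub_one_pow, iterate_derivative_smul, iterate_map_add,
    iterate_derivative_smul, iterate_derivative_smul]
  simp only [smul_add, smul_smul]
  congr 2
  all_goals
    simp only [Nat.factorial_succ]
    push_cast
    field_simp
    ring

lemma leg_eval_of_X_sq_sub_one_pow_eq {n : ℕ} {a : ℝ} {r : ℝ[X]}
    (h : ((X : ℝ[X]) ^ 2 - 1) ^ n = (X - C a) ^ n * r) : (leg n).eval a = r.eval a / 2 ^ n := by
  have := aeval_iterate_derivative_self (((X : ℝ[X]) ^ 2 - 1) ^ n) n a (p' := r) (by simpa using h)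
  rw [coe_aeval_eq_eval] at this
  rw [leg, eval_smul, this, nsmul_eq_mul, smul_eq_mul]
  field_simp

lemma leg_eval_one (n : ℕ) : (leg n).eval 1 = 1 := by
  rw [leg_eval_of_X_sq_sub_one_pow_eq (r := (X + 1) ^ n) (by rw [← mul_pow, map_one]; ring)]
  simp [one_add_one_eq_two]

lemma leg_eval_neg_one (n : ℕ) : (leg n).eval (-1) = (-1) ^ n := by
  rw [leg_eval_of_X_sq_sub_one_pow_eq (r := (X - 1) ^ n)
    (by rw [← mul_pow, map_neg, map_one, sub_neg_eq_add]; ring)]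
  rw [eval_pow, eval_sub, eval_X, eval_one, show (-1 - 1 : ℝ) = -1 * 2 by norm_num, mul_pow]
  field_simp

noncomputable def legPrim (k : ℕ) : ℝ[X] := (2 * k + 3 : ℝ)⁻¹ • (leg (k + 2) - leg k)

lemma derivative_legPrim (k : ℕ) : derivative (legPrim k) = leg (k + 1) := by
  have : (2 * k + 3 : ℝ) ≠ 0 := by positivity
  rw [legPrim, derivative_smul, derivative_sub, derivative_leg_add_two, add_sub_cancel_right,
    inv_smul_smul₀ this]

lemma legPrim_eval_one (k : ℕ) : (legPrim k).eval 1 = 0 := by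
  simp [legPrim, leg_eval_one]

lemma legPrim_eval_neg_one (k : ℕ) : (legPrim k).eval (-1) = 0 := by
  simp [legPrim, leg_eval_neg_one, pow_succ]

noncomputable def legSpan (i j : ℕ) : Submodule ℝ ℝ[X] := Submodule.span ℝ (leg '' Set.Icc i j)

lemma leg_mem_legSpan {i j m : ℕ} (hi : i ≤ m) (hj : m ≤ j) : leg m ∈ legSpan i j :=
  Submodule.subset_span ⟨m, ⟨hi, hj⟩, rfl⟩

lemma legSpan_mono {i j i' j' : ℕ} (hi : i' ≤ i) (hj : j ≤ j') : legSpan i j ≤ legSpan i' j' :=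
  Submodule.span_mono (Set.image_mono (Set.Icc_subset_Icc hi hj))

lemma legPrim_mem_legSpan (k : ℕ) : legPrim k ∈ legSpan k (k + 2) :=
  Submodule.smul_mem _ _ (Submodule.sub_mem _ (leg_mem_legSpan (by omega) le_rfl)
    (leg_mem_legSpan le_rfl (by omega)))

lemma exists_derivative_eq_of_mem_legSpan {a b : ℕ} (ha : 1 ≤ a) {S : ℝ[X]}
    (hS : S ∈ legSpan a b) :
    ∃ A ∈ legSpan (a - 1) (b + 1), derivative A = S ∧ A.eval 1 = 0 ∧ A.eval (-1) = 0 := by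
  let V := legSpan (a - 1) (b + 1) ⊓ LinearMap.ker (leval (1 : ℝ)) ⊓ LinearMap.ker (leval (-1 : ℝ))
  suffices legSpan a b ≤ V.map derivative by
    obtain ⟨A, ⟨⟨hA, h₁⟩, hneg⟩, rfl⟩ := this hS
    exact ⟨A, hA, rfl, h₁, hneg⟩
  refine Submodule.span_le.2 ?_
  rintro _ ⟨m, ⟨ham, hmb⟩, rfl⟩
  obtain ⟨k, rfl⟩ : ∃ k, m = k + 1 := ⟨m - 1, by omega⟩
  exact ⟨legPrim k, ⟨⟨legSpan_mono (by omega) (by omega) (legPrim_mem_legSpan k),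
    legPrim_eval_one k⟩, legPrim_eval_neg_one k⟩, derivative_legPrim k⟩

lemma iteratedDeriv_eval {𝕜 : Type*} [NontriviallyNormedField 𝕜] (k : ℕ) (P : 𝕜[X]) :
    iteratedDeriv k (fun x => P.eval x) = fun x => (derivative^[k] P).eval x := by
  induction k generalizing P with
  | zero => rfl
  | succ k ih =>
    rw [iteratedDeriv_succ', Function.iterate_succ_apply, ← ih]
    exact congrArg _ (funext fun x => P.deriv)

lemma integral_eval_derivative (A : ℝ[X]) (a b : ℝ) :
    ∫ t in a..b, (derivative A).eval t = A.eval b - A.eval a :=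
  intervalIntegral.integral_eq_sub_of_hasDerivAt (fun t _ => A.hasDerivAt t)
    (A.derivative.continuous.intervalIntegrable _ _)

lemma exists_psi_eq_eval (i : ℕ) : ∀ n ≤ i, ∃ P ∈ legSpan (i - n) (i + n),
    psi i n = (fun x => P.eval x) ∧ derivative^[n] P = leg i ∧
      ∀ k < n, (derivative^[k] P).eval 1 = 0 ∧ (derivative^[k] P).eval (-1) = 0
  | 0, _ => ⟨leg i, leg_mem_legSpan (by omega) (by omega), rfl, rfl, by simp⟩
  | n + 1, hn => by
    obtain ⟨P, hP, hψ, hPi, hvals⟩ := exists_psi_eq_eval i n (by omega)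
    obtain ⟨A, hA, rfl, h₁, hneg⟩ := exists_derivative_eq_of_mem_legSpan (by omega) hP
    refine ⟨A, legSpan_mono (by omega) (by omega) hA, ?_, hPi, ?_⟩
    · funext x
      simp only [psi, hψ, integral_eval_derivative, hneg, sub_zero]
    · rintro (_ | k) hk
      · exact ⟨h₁, hneg⟩
      · exact hvals k (by omega)

lemma inLegSpan_iff {i j : ℕ} {f : ℝ → ℝ} :
    inLegSpan i j f ↔ ∃ P ∈ legSpan i j, f = fun x => P.eval x := by
  constructor
  · rintro ⟨c, hc⟩
    refine ⟨∑ m ∈ Finset.Icc i j, c m • leg m, Submodule.sum_mem _ fun m hm => ?_, ?_⟩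
    · obtain ⟨him, hmj⟩ := Finset.mem_Icc.1 hm
      exact Submodule.smul_mem _ _ (leg_mem_legSpan him hmj)
    · funext x
      simp [hc, eval_finsetSum]
  · rintro ⟨P, hP, rfl⟩
    induction hP using Submodule.span_induction with
    | mem _ h =>
      obtain ⟨m, hm, rfl⟩ := h
      refine ⟨fun n => if n = m then 1 else 0, fun x => ?_⟩
      simp [Finset.mem_Icc.2 hm]
    | zero => exact ⟨0, by simp⟩
    | add _ _ _ _ hP hQ =>
      obtain ⟨c, hc⟩ := hP
      obtain ⟨d, hd⟩ := hQ
      exact ⟨c + d, fun x => by simp [hc, hd, add_mul, Finset.sum_add_distrib]⟩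
    | smul r _ _ hP =>
      obtain ⟨c, hc⟩ := hP
      exact ⟨r • c, fun x => by simp [hc, Finset.mul_sum, mul_assoc]⟩

lemma isQ_eval_iff {p ν : ℕ} {F : ℝ[X]} :
    IsQ p ν (fun x => F.eval x) ↔ F ∈ legSpan (p - ν) (p + ν + 1) ∧ F.eval 1 = 1 ∧
      F.eval (-1) = 0 ∧ ∀ i, 1 ≤ i → i ≤ ν →
        (derivative^[i] F).eval 1 = 0 ∧ (derivative^[i] F).eval (-1) = 0 := by
  have hspan : inLegSpan (p - ν) (p + ν + 1) (fun x => F.eval x) ↔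
      F ∈ legSpan (p - ν) (p + ν + 1) := by
    rw [inLegSpan_iff]
    constructor
    · rintro ⟨P, hP, hFP⟩
      rwa [Polynomial.funext (congrFun hFP)]
    · exact fun hF => ⟨F, hF, rfl⟩
  simp only [IsQ, hspan, iteratedDeriv_eval]

lemma eval_iterate_derivative_add_smul_of_eval_eq_zero {K : Type*} [CommRing K]
    {Q P R : K[X]} {k : ℕ} {x : K} (a b : K) (hP : (derivative^[k] P).eval x = 0)
    (hR : (derivative^[k] R).eval x = 0) :
    (derivative^[k] (Q + a • P + b • R)).eval x = (derivative^[k] Q).eval x := by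
  simp [iterate_map_add, iterate_derivative_smul, hP, hR]

lemma eval_iterate_derivative_correction_eq_zero (p n : ℕ) {Q P R : ℝ[X]}
    (hP : derivative^[n] P = leg p) (hR : derivative^[n] R = leg (p + 1)) :
    let a := (derivative^[n] Q).eval 1
    let b := (derivative^[n] Q).eval (-1)
    let F := Q + (-(a + (-1) ^ p * b) / 2) • P + (-(a - (-1) ^ p * b) / 2) • R
    (derivative^[n] F).eval 1 = 0 ∧ (derivative^[n] F).eval (-1) = 0 := by
  have hsq : ((-1 : ℝ) ^ p) ^ 2 = 1 := by rw [← pow_mul, pow_mul', neg_one_sq, one_pow]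
  simp only [iterate_map_add, iterate_derivative_smul, eval_add, eval_smul, smul_eq_mul, hP, hR,
    leg_eval_one, leg_eval_neg_one, pow_succ]
  constructor
  · ring
  · linear_combination (-(derivative^[n] Q).eval (-1)) * hsq

/-- If `q_{p,ν} ∈ Λ_{p−ν}^{p+ν+1}` satisfies the endpoint conditions and
`p ≥ ν + 1`, then `q_{p,ν+1} := q_{p,ν} + α_{p,ν+1} ψ_{p,ν+1} + β_{p,ν+1} ψ_{p+1,ν+1}` with the
stated coefficients lies in `Λ_{p−ν−1}^{p+ν+2}` and satisfies the endpoint conditions of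
order `ν+1`. -/
theorem q_recursive_step (p ν : ℕ) (hp : ν + 1 ≤ p) (q : ℝ → ℝ) (hq : IsQ p ν q) :
    IsQ p (ν + 1) (fun x =>
      q x
        + (-(iteratedDeriv (ν + 1) q 1 + (-1 : ℝ) ^ p * iteratedDeriv (ν + 1) q (-1)) / 2) *
            psi p (ν + 1) x
        + (-(iteratedDeriv (ν + 1) q 1 - (-1 : ℝ) ^ p * iteratedDeriv (ν + 1) q (-1)) / 2) *
            psi (p + 1) (ν + 1) x) := by
  obtain ⟨Q, -, rfl⟩ := inLegSpan_iff.1 hq.1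
  obtain ⟨hQ, hQ₁, hQneg, hQder⟩ := isQ_eval_iff.1 hq
  obtain ⟨P, hP, hψP, hPder, hPvals⟩ := exists_psi_eq_eval p (ν + 1) hp
  obtain ⟨R, hR, hψR, hRder, hRvals⟩ := exists_psi_eq_eval (p + 1) (ν + 1) (by omega)
  simp only [iteratedDeriv_eval, hψP, hψR]
  set α := -((derivative^[ν + 1] Q).eval 1 + (-1) ^ p * (derivative^[ν + 1] Q).eval (-1)) / 2
  set β := -((derivative^[ν + 1] Q).eval 1 - (-1) ^ p * (derivative^[ν + 1] Q).eval (-1)) / 2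
  have hF : (fun x => Q.eval x + α * P.eval x + β * R.eval x) =
      fun x => (Q + α • P + β • R).eval x := by
    simp
  have hlow (k : ℕ) (hk : k ≤ ν) :
      (derivative^[k] (Q + α • P + β • R)).eval 1 = (derivative^[k] Q).eval 1 ∧
        (derivative^[k] (Q + α • P + β • R)).eval (-1) = (derivative^[k] Q).eval (-1) :=
    ⟨eval_iterate_derivative_add_smul_of_eval_eq_zero α β (hPvals k (by omega)).1
        (hRvals k (by omega)).1,
      eval_iterate_derivative_add_smul_of_eval_eq_zero α β (hPvals k (by omega)).2
        (hRvals k (by omega)).2⟩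
  rw [hF, isQ_eval_iff]
  refine ⟨?_, (hlow 0 (by omega)).1.trans hQ₁, (hlow 0 (by omega)).2.trans hQneg,
    fun k hk₁ hk => ?_⟩
  · exact add_mem (add_mem (legSpan_mono (by omega) (by omega) hQ)
      (Submodule.smul_mem _ _ (legSpan_mono (by omega) (by omega) hP)))
      (Submodule.smul_mem _ _ (legSpan_mono (by omega) (by omega) hR))
  rcases hk.lt_or_eq with hk | rfl
  · rw [(hlow k (by omega)).1, (hlow k (by omega)).2]
    exact hQder k hk₁ (by omega)
  · exact eval_iterate_derivative_correction_eq_zero p (ν + 1) hPder hRder
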